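/- Let M be a matroid on a finite totally ordered ground set E and B a basis of M. If e ∈ E\B is not externally active (i.e., e is not the minimal element of the fundamental circuit C of e with respect to B), then there exists e' ∈ C with e' < e such that B − e' + e is again a basis of M, and the basis B − e' + e is lexicographically smaller data in the sense that swapping decreases the element. Consequently, for X ⊆ E with X\B' a basis of M|X where B' = B_min((M|X)*), every element of B' is the minimal element of its fundamental circuit with respect to X\B' in M|X. -/

import Mathlib

open Matroid Set
open scoped Classical

variable {α : Type*}

/-- A circuit of a matroid: a minimal dependent set. -/
def Circ (M : Matroid α) (C : Set α) : Prop := Minimal M.Dep C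

/-- Contraction of a set `X` in a matroid `M`, defined via duality and restriction. -/
def mcon (M : Matroid α) (X : Set α) : Matroid α := (M✶ ↾ (M✶.E \ X))✶

/-- The rank of a matroid: the (common) cardinality of its bases. -/
noncomputable def rkN (M : Matroid α) : ℕ := sSup (Set.ncard '' {B | M.IsBase B})

/-- The rank of a set `X` in a matroid `M`. -/
noncomputable def rset (M : Matroid α) (X : Set α) : ℕ := rkN (M ↾ X)

/-- `e` is the minimal element of the set `C`. -/
def IsMinOf [LinearOrder α] (e : α) (C : Set α) : Prop := e ∈ C ∧ ∀ f ∈ C, e ≤ f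

/-- `e` is externally active in `M` with respect to `X`. -/
def ExtAct [LinearOrder α] (M : Matroid α) (X : Set α) (e : α) : Prop :=
  e ∈ M.E \ X ∧ ∃ C, Circ M C ∧ C ⊆ insert e X ∧ IsMinOf e C

/-- `e` is internally active in `M'` with respect to `X`. -/
def IntAct [LinearOrder α] (M' : Matroid α) (X : Set α) (e : α) : Prop :=
  e ∈ X ∧ ∃ C, Circ (M'✶) C ∧ C ⊆ insert e (M'.E \ X) ∧ IsMinOf e C

/-- The set `Ext_M(X)` of externally active elements. -/
def ExtSet [LinearOrder α] (M : Matroid α) (X : Set α) : Set α := {e | ExtAct M X e}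

/-- The set `Int_{M'}(X)` of internally active elements. -/
def IntSet [LinearOrder α] (M' : Matroid α) (X : Set α) : Set α := {e | IntAct M' X e}

/-- `Y` is `(M,<)`-compatible: no `M`-circuit `C` satisfies `Y ∩ C = {min C}`. -/
def Compat [LinearOrder α] (M : Matroid α) (Y : Set α) : Prop :=
  ¬ ∃ C e, Circ M C ∧ IsMinOf e C ∧ Y ∩ C = {e}

/-- `(M, M')` is a matroid perspective: same ground set, and every circuit of `M`
is a union of circuits of `M'` (equivalently, every point of an `M`-circuit `C` lies in
an `M'`-circuit contained in `C`). -/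
def Perspective (M M' : Matroid α) : Prop :=
  M.E = M'.E ∧ ∀ C, Circ M C → ∀ x ∈ C, ∃ C', Circ M' C' ∧ C' ⊆ C ∧ x ∈ C'

/-- `A` is lexicographically smaller than `B` (at the minimal element where they differ). -/
def LexLT [LinearOrder α] (A B : Set α) : Prop :=
  ∃ e, e ∈ A ∧ e ∉ B ∧ ∀ f, f < e → (f ∈ A ↔ f ∈ B)

/-- `B` is the lexicographically minimal basis of `M`. -/
def MinBasis [LinearOrder α] (M : Matroid α) (B : Set α) : Prop :=
  M.IsBase B ∧ ∀ B', M.IsBase B' → ¬ LexLT B' B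

/-- The collection `D(M, M', <)` of compatible sets of a matroid perspective. -/
def DSet [LinearOrder α] (M M' : Matroid α) : Set (Set α) :=
  {X | X ⊆ M.E ∧ Compat (M'✶) X ∧ Compat M (M.E \ X)}

/-- Every dependent set in a finite matroid contains a circuit. -/
lemma exists_circ_subset [Fintype α] (M : Matroid α) {D : Set α} (hD : M.Dep D) :
    ∃ C, Circ M C ∧ C ⊆ D := by
  obtain ⟨C, ⟨hC, hCD⟩, hmin⟩ := (wellFounded_lt (α := Set α)).has_min
    {A | M.Dep A ∧ A ⊆ D} ⟨D, hD, subset_rfl⟩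
  refine ⟨C, ⟨hC, fun Y hY hYC ↦ ?_⟩, hCD⟩
  by_contra hcon
  exact hmin Y ⟨hY, hYC.trans hCD⟩ (lt_of_le_of_ne hYC (by rintro rfl; exact hcon le_rfl))

/-- Proper subsets of a circuit are independent. -/
lemma circ_diff_indep (M : Matroid α) {C : Set α} (hC : Circ M C) {x : α} (hx : x ∈ C) :
    M.Indep (C \ {x}) := by
  by_contra hdep
  have hE : C \ {x} ⊆ M.E := (diff_subset).trans hC.prop.subset_ground
  have := hC.2 ⟨hdep, hE⟩ diff_subset
  exact (this hx).2 rfl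

/-- Each element of a circuit lies in the closure of the rest. -/
lemma circ_mem_closure (M : Matroid α) {C : Set α} (hC : Circ M C) {x : α} (hx : x ∈ C) :
    x ∈ M.closure (C \ {x}) := by
  have hI := circ_diff_indep M hC hx
  have hdep : M.Dep (insert x (C \ {x})) := by
    rw [insert_diff_singleton, insert_eq_of_mem hx]
    exact hC.prop
  exact (hI.insert_dep_iff.1 hdep).1

/-- Part 1 as a standalone lemma. -/
lemma exchange_lemma [Fintype α] [LinearOrder α] (M : Matroid α) :
    ∀ B : Set α, M.IsBase B → ∀ e ∈ M.E \ B, ∀ C : Set α, Circ M C → C ⊆ insert e B →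
      e ∈ C → ¬ IsMinOf e C →
      ∃ e' ∈ C, e' < e ∧ M.IsBase (insert e (B \ {e'})) := by
  intro B hB e he C hC hCB heC hne
  have hmin : ∃ e' ∈ C, e' < e := by
    by_contra h
    push_neg at h
    exact hne ⟨heC, fun f hf ↦ h f hf⟩
  obtain ⟨e', he'C, he'lt⟩ := hmin
  have hne' : e' ≠ e := ne_of_lt he'lt
  have he'B : e' ∈ B := by
    rcases hCB he'C with h | h
    · exact absurd h hne'
    · exact h
  have heB : e ∉ B := he.2
  refine ⟨e', he'C, he'lt, ?_⟩
  have hBd : M.Indep (B \ {e'}) := hB.indep.subset diff_subset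
  have hIe : M.Indep (insert e (B \ {e'})) := by
    by_contra hdep
    have hdep' : M.Dep (insert e (B \ {e'})) := by
      rw [Matroid.dep_iff]
      exact ⟨hdep, insert_subset he.1 (diff_subset.trans hB.subset_ground)⟩
    have hecl : e ∈ M.closure (B \ {e'}) := (hBd.insert_dep_iff.1 hdep').1
    -- C \ {e'} ⊆ closure (B \ {e'})
    have hsub : C \ {e'} ⊆ M.closure (B \ {e'}) := by
      rintro x ⟨hxC, hxne⟩
      rcases hCB hxC with rfl | hxB
      · exact hecl
      · exact M.subset_closure (B \ {e'}) (diff_subset.trans hB.subset_ground)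
          ⟨hxB, hxne⟩
    have he'cl : e' ∈ M.closure (B \ {e'}) := by
      have h1 : e' ∈ M.closure (C \ {e'}) := circ_mem_closure M hC he'C
      have h2 : M.closure (C \ {e'}) ⊆ M.closure (B \ {e'}) :=
        M.closure_subset_closure_of_subset_closure hsub
      exact h2 h1
    have hspan : M.Spanning (B \ {e'}) := by
      rw [Matroid.spanning_iff_closure_eq (diff_subset.trans hB.subset_ground)]
      refine subset_antisymm (M.closure_subset_ground _) ?_
      have hBsub : B ⊆ M.closure (B \ {e'}) := by
        intro x hx
        by_cases hxe : x = e'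
        · exact hxe ▸ he'cl
        · exact M.subset_closure (B \ {e'}) (diff_subset.trans hB.subset_ground) ⟨hx, hxe⟩
      calc M.E = M.closure B := hB.closure_eq.symm
        _ ⊆ M.closure (M.closure (B \ {e'})) := M.closure_subset_closure hBsub
        _ = M.closure (B \ {e'}) := M.closure_closure _
    obtain ⟨B₀, hB₀, hB₀sub⟩ := hspan.exists_isBase_subset
    have : B₀ = B := hB₀.eq_of_subset_isBase hB (hB₀sub.trans diff_subset)
    exact (hB₀sub (this ▸ he'B)).2 rfl
  exact hB.exchange_isBase_of_indep heB hIe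

/-- main -/
theorem basis_exchange_and_minimal_fundamental_circuit [Fintype α] [LinearOrder α]
    (M : Matroid α) :
    (∀ B : Set α, M.IsBase B → ∀ e ∈ M.E \ B, ∀ C : Set α, Circ M C → C ⊆ insert e B →
      e ∈ C → ¬ IsMinOf e C →
      ∃ e' ∈ C, e' < e ∧ M.IsBase (insert e (B \ {e'}))) ∧
    (∀ X : Set α, X ⊆ M.E → ∀ B' : Set α, MinBasis ((M ↾ X)✶) B' →
      (M ↾ X).IsBase (X \ B') → ∀ e ∈ B',
      ∃ C : Set α, Circ (M ↾ X) C ∧ C ⊆ insert e (X \ B') ∧ IsMinOf e C) := by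
  constructor
  · exact exchange_lemma M
  · intro X hXE B' hB'min hXB' e heB'
    have hB'base : ((M ↾ X)✶).IsBase B' := hB'min.1
    have hB'X : B' ⊆ X := hB'base.subset_ground
    have heX : e ∈ X := hB'X heB'
    have heD : e ∉ X \ B' := fun h ↦ h.2 heB'
    -- insert e (X \ B') is dependent
    have hdep : (M ↾ X).Dep (insert e (X \ B')) :=
      hXB'.insert_dep ⟨heX, heD⟩
    obtain ⟨C, hC, hCsub⟩ := exists_circ_subset (M ↾ X) hdep
    have heC : e ∈ C := by
      by_contra h
      have : C ⊆ X \ B' := fun x hx ↦ (hCsub hx).resolve_left (by rintro rfl; exact h hx)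
      exact (hC.prop.not_indep) (hXB'.indep.subset this)
    refine ⟨C, hC, hCsub, ?_⟩
    by_contra hnotmin
    have heE : e ∈ (M ↾ X).E \ (X \ B') := ⟨heX, heD⟩
    obtain ⟨e', he'C, he'lt, hbase2⟩ :=
      exchange_lemma (M ↾ X) (X \ B') hXB' e heE C hC hCsub heC hnotmin
    have he'ne : e' ≠ e := ne_of_lt he'lt
    have he'XB : e' ∈ X \ B' := (hCsub he'C).resolve_left he'ne
    -- the new dual base
    set B₂ : Set α := insert e' (B' \ {e}) with hB₂def
    have hcompl : X \ B₂ = insert e ((X \ B') \ {e'}) := by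
      ext x
      simp only [hB₂def, mem_diff, mem_insert_iff, mem_singleton_iff]
      have h1 : e ∈ B' := heB'
      have h2 : e' ∉ B' := he'XB.2
      have h3 : e ∈ X := heX
      have h4 : e' ∈ X := he'XB.1
      by_cases hxe : x = e
      · subst hxe; tauto
      · by_cases hxe' : x = e'
        · subst hxe'; tauto
        · tauto
    have hB₂X : B₂ ⊆ X := insert_subset he'XB.1 (diff_subset.trans hB'X)
    have hB₂base : ((M ↾ X)✶).IsBase B₂ := by
      rw [Matroid.dual_isBase_iff hB₂X]
      show (M ↾ X).IsBase ((M ↾ X).E \ B₂)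
      rw [Matroid.restrict_ground_eq, hcompl]
      exact hbase2
    refine hB'min.2 B₂ hB₂base ⟨e', mem_insert _ _, he'XB.2, fun f hf ↦ ?_⟩
    have hfne' : f ≠ e' := ne_of_lt hf
    have hfne : f ≠ e := ne_of_lt (hf.trans he'lt)
    simp only [hB₂def, mem_insert_iff, mem_diff, mem_singleton_iff]
    constructor
    · rintro (rfl | ⟨h, _⟩)
      · exact absurd rfl hfne'
      · exact h
    · intro h
      exact Or.inr ⟨h, hfne⟩
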